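/- Let Z ∈ ℂ^{n1×n2×n3} admit a skinny transformed tensor SVD Z = U ⋄ S ⋄ Vᴴ with transformed multi-rank (r_1,…,r_{n3}), suppose Z satisfies the tensor incoherence conditions with parameter μ ≥ 1, and let T be the subspace determined by U and V. Then for every i ∈ [n1], j ∈ [n2], k ∈ [n3], the orthogonal projection of the unit tensor satisfies ‖P_T(E_ijk)‖_F² ≤ 2μ(Σ_{t=1}^{n3} r_t)/(n_(2) n_3). -/

import Mathlib

open scoped BigOperators ComplexConjugate
open MeasureTheory Matrix

noncomputable section

/-- A third-order complex tensor. -/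
abbrev Tensor (n1 n2 n3 : ℕ) : Type := Fin n1 → Fin n2 → Fin n3 → ℂ

namespace Tensor

variable {n1 n2 n3 n4 r : ℕ}

/-- The `t`-th frontal slice of the transformed tensor `Φ[A]`. -/
def slice (Φ : Matrix (Fin n3) (Fin n3) ℂ) (A : Tensor n1 n2 n3) (t : Fin n3) :
    Matrix (Fin n1) (Fin n2) ℂ :=
  Matrix.of fun i j => ∑ k, Φ t k * A i j k

/-- Reconstruct a tensor from its transformed frontal slices (inverse transform `Φᴴ[·]`). -/
def unslice (Φ : Matrix (Fin n3) (Fin n3) ℂ)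
    (M : Fin n3 → Matrix (Fin n1) (Fin n2) ℂ) : Tensor n1 n2 n3 :=
  fun i j k => ∑ t, (starRingEnd ℂ) (Φ t k) * M t i j

/-- The Φ-product `A ⋄ B`. -/
def tprod (Φ : Matrix (Fin n3) (Fin n3) ℂ) (A : Tensor n1 n2 n3) (B : Tensor n2 n4 n3) :
    Tensor n1 n4 n3 :=
  unslice Φ fun t => slice Φ A t * slice Φ B t

/-- The conjugate transpose `Aᴴ` with respect to `Φ`. -/
def tconj (Φ : Matrix (Fin n3) (Fin n3) ℂ) (A : Tensor n1 n2 n3) : Tensor n2 n1 n3 :=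
  unslice Φ fun t => (slice Φ A t)ᴴ

/-- Frobenius norm of a tensor. -/
def frob (A : Tensor n1 n2 n3) : ℝ :=
  Real.sqrt (∑ i, ∑ j, ∑ k, Complex.normSq (A i j k))

/-- Entrywise inner product `⟨A, B⟩ = Σ conj(A) B`. -/
def tinner (A B : Tensor n1 n2 n3) : ℂ :=
  ∑ i, ∑ j, ∑ k, (starRingEnd ℂ) (A i j k) * B i j k

/-- `‖A‖_∞`, the max modulus of the entries. -/
def inftyNorm (A : Tensor n1 n2 n3) : ℝ :=
  ⨆ i, ⨆ j, ⨆ k, ‖A i j k‖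

/-- `‖A‖_{∞,2}`. -/
def infty2Norm (A : Tensor n1 n2 n3) : ℝ :=
  max (⨆ i : Fin n1, Real.sqrt (∑ b, ∑ k, Complex.normSq (A i b k)))
      (⨆ j : Fin n2, Real.sqrt (∑ a, ∑ k, Complex.normSq (A a j k)))

/-- The weighted norm `‖A‖_{∞,w}` for a weight vector `w`. -/
def inftyWNorm (w : Fin n3 → ℝ) (A : Tensor n1 n2 n3) : ℝ :=
  max (⨆ i : Fin n1, Real.sqrt (∑ b, ∑ k, (w k) ^ 2 * Complex.normSq (A i b k)))
      (⨆ j : Fin n2, Real.sqrt (∑ a, ∑ k, (w k) ^ 2 * Complex.normSq (A a j k)))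

/-- Spectral norm of a complex matrix (ℓ²→ℓ² operator norm). -/
def specNormM {m n : ℕ} (M : Matrix (Fin m) (Fin n) ℂ) : ℝ :=
  ‖LinearMap.toContinuousLinearMap (Matrix.toEuclideanLin M)‖

/-- Nuclear norm of a complex matrix: the sum of its singular values. -/
def nuclearNormM {m n : ℕ} (M : Matrix (Fin m) (Fin n) ℂ) : ℝ :=
  ∑ i, Real.sqrt ((Matrix.isHermitian_conjTranspose_mul_self M).eigenvalues i)

/-- Tensor spectral norm: max of spectral norms of transformed frontal slices. -/
def specNorm (Φ : Matrix (Fin n3) (Fin n3) ℂ) (A : Tensor n1 n2 n3) : ℝ :=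
  ⨆ t, specNormM (slice Φ A t)

/-- Transformed tensor nuclear norm. -/
def ttnn (Φ : Matrix (Fin n3) (Fin n3) ℂ) (A : Tensor n1 n2 n3) : ℝ :=
  ∑ t, nuclearNormM (slice Φ A t)

/-- The sampling projection `P_Ω`. -/
def projOmega (Ω : Set (Fin n1 × Fin n2 × Fin n3)) (A : Tensor n1 n2 n3) :
    Tensor n1 n2 n3 :=
  fun i j k => Ω.indicator (fun p => A p.1 p.2.1 p.2.2) (i, j, k)

/-- The column-basis tensor `e_ik ∈ ℂ^{n×1×n3}`. -/
def colBasis {n n3 : ℕ} (i : Fin n) (k : Fin n3) : Tensor n 1 n3 :=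
  fun a _ c => if a = i ∧ c = k then 1 else 0

/-- The unit tensor `E_ijk`. -/
def unitTensor (i : Fin n1) (j : Fin n2) (k : Fin n3) : Tensor n1 n2 n3 :=
  fun a b c => if a = i ∧ b = j ∧ c = k then 1 else 0

/-- The orthogonal projection `P_T` onto the subspace `T` determined by `U, V`. -/
def projT (Φ : Matrix (Fin n3) (Fin n3) ℂ) (U : Tensor n1 r n3) (V : Tensor n2 r n3)
    (X : Tensor n1 n2 n3) : Tensor n1 n2 n3 :=
  tprod Φ (tprod Φ U (tconj Φ U)) X + tprod Φ X (tprod Φ V (tconj Φ V))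
    - tprod Φ (tprod Φ (tprod Φ U (tconj Φ U)) X) (tprod Φ V (tconj Φ V))

/-- `P_{T⊥}(X) = X - P_T(X)`. -/
def projTperp (Φ : Matrix (Fin n3) (Fin n3) ℂ) (U : Tensor n1 r n3) (V : Tensor n2 r n3)
    (X : Tensor n1 n2 n3) : Tensor n1 n2 n3 :=
  X - projT Φ U V X

/-- Operator norm of a map on tensors, w.r.t. the Frobenius norm. -/
def opNorm (L : Tensor n1 n2 n3 → Tensor n1 n2 n3) : ℝ :=
  sSup ((fun X => frob (L X)) '' {X | frob X ≤ 1})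

/-- A skinny transformed tensor SVD `Z = U ⋄ S ⋄ Vᴴ`. -/
structure SkinnySVD (Φ : Matrix (Fin n3) (Fin n3) ℂ) (Z : Tensor n1 n2 n3) (r : ℕ)
    (U : Tensor n1 r n3) (S : Tensor r r n3) (V : Tensor n2 r n3) : Prop where
  factor : Z = tprod Φ (tprod Φ U S) (tconj Φ V)
  U_orth : ∀ t, (slice Φ U t)ᴴ * slice Φ U t = 1
  V_orth : ∀ t, (slice Φ V t)ᴴ * slice Φ V t = 1
  S_offdiag : ∀ t i j, i ≠ j → slice Φ S t i j = 0
  S_diag_real_nonneg : ∀ t i, (slice Φ S t i i).im = 0 ∧ 0 ≤ (slice Φ S t i i).re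

/-- The tensor incoherence conditions with parameter μ. -/
def Incoherent (Φ : Matrix (Fin n3) (Fin n3) ℂ) (Z : Tensor n1 n2 n3)
    (U : Tensor n1 r n3) (V : Tensor n2 r n3) (μ : ℝ) : Prop :=
  (∀ (i : Fin n1) (k : Fin n3),
      (frob (tprod Φ (tconj Φ U) (colBasis i k))) ^ 2
        ≤ μ * (∑ t, ((slice Φ Z t).rank : ℝ)) / (n1 * n3)) ∧
  (∀ (j : Fin n2) (k : Fin n3),
      (frob (tprod Φ (tconj Φ V) (colBasis j k))) ^ 2
        ≤ μ * (∑ t, ((slice Φ Z t).rank : ℝ)) / (n2 * n3))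

/-- Bernoulli measure on `Bool` with success probability ρ. -/
def berMeasure (ρ : ℝ) : Measure Bool :=
  ρ.toNNReal • Measure.dirac true + (1 - ρ).toNNReal • Measure.dirac false

instance (ρ : ℝ) : IsFiniteMeasure (berMeasure ρ) := by
  unfold berMeasure; infer_instance

/-- The i.i.d. Bernoulli sampling model `Ω ~ Ber(ρ)`. -/
def berPi (n1 n2 n3 : ℕ) (ρ : ℝ) : Measure ((Fin n1 × Fin n2 × Fin n3) → Bool) :=
  Measure.pi fun _ => berMeasure ρ

/-- The random set `Ω` determined by a Bernoulli sample. -/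
def omegaSet {n1 n2 n3 : ℕ} (ω : (Fin n1 × Fin n2 × Fin n3) → Bool) :
    Set (Fin n1 × Fin n2 × Fin n3) := {p | ω p = true}

end Tensor

open Tensor

/-! On every transformed slice, `P_T` acts as `X ↦ QX + XR - QXR` with the orthogonal projections
`Q = UUᴴ`, `R = VVᴴ`. Rewritten as `QX + (1 - Q)(XR)`, this is an orthogonal sum, so its squared
Frobenius norm is at most `‖QX‖² + ‖XR‖² = ‖UᴴX‖² + ‖XV‖²`. For `X` the slice of `E_ijk` these are
the slices of `Uᴴ ⋄ e_ik` and `Vᴴ ⋄ e_jk`; since `Φ` is unitary, Parseval adds the slices up to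
`‖Uᴴ ⋄ e_ik‖_F² + ‖Vᴴ ⋄ e_jk‖_F²`, which incoherence bounds by `μ Σ r_t (1/(n1 n3) + 1/(n2 n3))`. -/

namespace Matrix

variable {l m n o : Type*} [Fintype m]

lemma conjTranspose_mul_mul_one_sub_mul_eq_zero [DecidableEq m] {P : Matrix m m ℂ}
    (hP : IsStarProjection P) (Y : Matrix m n ℂ) (W : Matrix m o ℂ) :
    (P * Y)ᴴ * ((1 - P) * W) = 0 := by
  rw [conjTranspose_mul, Matrix.mul_assoc, ← Matrix.mul_assoc Pᴴ, ← star_eq_conjTranspose,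
    hP.isSelfAdjoint.star_eq, hP.mul_one_sub_self, Matrix.zero_mul, Matrix.mul_zero]

variable [Fintype l] [Fintype n] [Fintype o]

def frobeniusNormSq (M : Matrix m n ℂ) : ℝ :=
  ∑ a, ∑ b, Complex.normSq (M a b)

lemma frobeniusNormSq_nonneg (M : Matrix m n ℂ) : 0 ≤ frobeniusNormSq M :=
  Finset.sum_nonneg fun _ _ => Finset.sum_nonneg fun _ _ => Complex.normSq_nonneg _

lemma ofReal_frobeniusNormSq (M : Matrix m n ℂ) :
    (frobeniusNormSq M : ℂ) = (Mᴴ * M).trace := by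
  rw [← star_vec_dotProduct_vec, frobeniusNormSq, dotProduct,
    ← Equiv.sum_comp (Equiv.prodComm _ _), Fintype.sum_prod_type]
  push_cast
  simp [vec, Complex.normSq_eq_conj_mul_self]

lemma frobeniusNormSq_conjTranspose (M : Matrix m n ℂ) :
    frobeniusNormSq Mᴴ = frobeniusNormSq M := by
  rw [frobeniusNormSq, frobeniusNormSq, Finset.sum_comm]
  simp [Complex.normSq_conj]

lemma frobeniusNormSq_add_of_conjTranspose_mul_eq_zero {A B : Matrix m n ℂ} (h : Aᴴ * B = 0) :
    frobeniusNormSq (A + B) = frobeniusNormSq A + frobeniusNormSq B := by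
  have h' : Bᴴ * A = 0 := by rw [← conjTranspose_conjTranspose A, ← conjTranspose_mul, h,
    conjTranspose_zero]
  apply Complex.ofReal_injective
  push_cast
  simp only [ofReal_frobeniusNormSq, conjTranspose_add, Matrix.add_mul, Matrix.mul_add, h, h',
    add_zero, zero_add, trace_add]

lemma frobeniusNormSq_mul_le_of_isStarProjection [DecidableEq m] {P : Matrix m m ℂ}
    (hP : IsStarProjection P) (Y : Matrix m n ℂ) : frobeniusNormSq (P * Y) ≤ frobeniusNormSq Y := by
  have hsplit := frobeniusNormSq_add_of_conjTranspose_mul_eq_zero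
    (conjTranspose_mul_mul_one_sub_mul_eq_zero hP Y Y)
  rw [← Matrix.add_mul, add_sub_cancel, Matrix.one_mul] at hsplit
  linarith [frobeniusNormSq_nonneg ((1 - P) * Y)]

lemma frobeniusNormSq_mul_of_conjTranspose_mul_self_eq_one [DecidableEq l] {U : Matrix m l ℂ}
    (hU : Uᴴ * U = 1) (Y : Matrix l n ℂ) : frobeniusNormSq (U * Y) = frobeniusNormSq Y := by
  apply Complex.ofReal_injective
  rw [ofReal_frobeniusNormSq, ofReal_frobeniusNormSq, conjTranspose_mul, Matrix.mul_assoc,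
    ← Matrix.mul_assoc Uᴴ, hU, Matrix.one_mul]

lemma frobeniusNormSq_mul_conjTranspose_of_conjTranspose_mul_self_eq_one [DecidableEq l]
    {V : Matrix n l ℂ} (hV : Vᴴ * V = 1) (Y : Matrix m l ℂ) : frobeniusNormSq (Y * Vᴴ) = frobeniusNormSq Y := by
  rw [← frobeniusNormSq_conjTranspose, conjTranspose_mul, conjTranspose_conjTranspose,
    frobeniusNormSq_mul_of_conjTranspose_mul_self_eq_one hV, frobeniusNormSq_conjTranspose]

lemma isStarProjection_mul_conjTranspose [DecidableEq l] {U : Matrix m l ℂ} (hU : Uᴴ * U = 1) :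
    IsStarProjection (U * Uᴴ) where
  isIdempotentElem := by
    rw [IsIdempotentElem, Matrix.mul_assoc, ← Matrix.mul_assoc Uᴴ, hU, Matrix.one_mul]
  isSelfAdjoint := by
    rw [IsSelfAdjoint, star_eq_conjTranspose, conjTranspose_mul, conjTranspose_conjTranspose]

lemma frobeniusNormSq_mul_add_mul_sub_le [DecidableEq m] {Q : Matrix m m ℂ}
    (hQ : IsStarProjection Q) (X : Matrix m n ℂ) (R : Matrix n n ℂ) :
    frobeniusNormSq (Q * X + X * R - Q * X * R)
      ≤ frobeniusNormSq (Q * X) + frobeniusNormSq (X * R) := by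
  have hdecomp : Q * X + X * R - Q * X * R = Q * X + (1 - Q) * (X * R) := by
    rw [Matrix.sub_mul, Matrix.one_mul, Matrix.mul_assoc]; abel
  rw [hdecomp, frobeniusNormSq_add_of_conjTranspose_mul_eq_zero
    (conjTranspose_mul_mul_one_sub_mul_eq_zero hQ X (X * R))]
  gcongr
  exact frobeniusNormSq_mul_le_of_isStarProjection hQ.one_sub _

lemma frobeniusNormSq_mul_single [DecidableEq n] [DecidableEq o] (A : Matrix m n ℂ) (i : n)
    (j : o) (c : ℂ) :
    frobeniusNormSq (A * single i j c) = Complex.normSq c * ∑ a, Complex.normSq (A a i) := by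
  rw [frobeniusNormSq, Finset.mul_sum]
  refine Finset.sum_congr rfl fun a _ => ?_
  rw [Finset.sum_eq_single j]
  · rw [mul_single_apply_same, Complex.normSq_mul, mul_comm]
  · intro b _ hb
    rw [mul_single_apply_of_ne c i j a b hb A, map_zero]
  · simp

lemma frobeniusNormSq_single_mul [DecidableEq m] [DecidableEq n] (i : m) (j : n) (c : ℂ)
    (A : Matrix n o ℂ) :
    frobeniusNormSq (single i j c * A) = Complex.normSq c * ∑ b, Complex.normSq (A j b) := by
  rw [← frobeniusNormSq_conjTranspose, conjTranspose_mul, conjTranspose_single,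
    frobeniusNormSq_mul_single]
  simp [Complex.normSq_conj]

lemma sum_normSq_mulVec_of_conjTranspose_mul_self_eq_one [DecidableEq l] {U : Matrix m l ℂ}
    (hU : Uᴴ * U = 1) (v : l → ℂ) :
    ∑ a, Complex.normSq ((U *ᵥ v) a) = ∑ b, Complex.normSq (v b) := by
  have h := frobeniusNormSq_mul_of_conjTranspose_mul_self_eq_one hU (replicateCol Unit v)
  rw [← replicateCol_mulVec] at h
  simpa [frobeniusNormSq, replicateCol_apply] using h

end Matrix

namespace Tensor

variable {n1 n2 n3 n4 r : ℕ} {Φ : Matrix (Fin n3) (Fin n3) ℂ}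

lemma slice_add (A B : Tensor n1 n2 n3) (t : Fin n3) :
    slice Φ (A + B) t = slice Φ A t + slice Φ B t := by
  ext a b
  simp [slice, mul_add, Finset.sum_add_distrib]

lemma slice_sub (A B : Tensor n1 n2 n3) (t : Fin n3) :
    slice Φ (A - B) t = slice Φ A t - slice Φ B t := by
  ext a b
  simp [slice, mul_sub, Finset.sum_sub_distrib]

lemma slice_unitTensor (i : Fin n1) (j : Fin n2) (k : Fin n3) (t : Fin n3) :
    slice Φ (unitTensor i j k) t = single i j (Φ t k) := by
  ext a b
  simp only [slice, unitTensor, single, of_apply, mul_ite, mul_one, mul_zero]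
  by_cases ha : i = a <;> by_cases hb : j = b <;>
    simp [ha, hb, eq_comm (a := a), eq_comm (a := b)]

lemma slice_colBasis (i : Fin n1) (k : Fin n3) (t : Fin n3) :
    slice Φ (colBasis i k) t = single i 0 (Φ t k) := by
  ext a b
  rw [Fin.fin_one_eq_zero b]
  simp only [slice, colBasis, single, of_apply, mul_ite, mul_one, mul_zero]
  by_cases ha : i = a <;> simp [ha, eq_comm (a := a)]

section Unitary

variable (hΦ : Φ ∈ unitaryGroup (Fin n3) ℂ)
include hΦ

lemma slice_unslice (M : Fin n3 → Matrix (Fin n1) (Fin n2) ℂ) (t : Fin n3) :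
    slice Φ (unslice Φ M) t = M t := by
  have hΦ' : Φ * Φᴴ = 1 := mem_unitaryGroup_iff.mp hΦ
  ext a b
  calc ∑ c, Φ t c * ∑ s, conj (Φ s c) * M s a b
      = ∑ s, (Φ * Φᴴ) t s * M s a b := by
        simp only [mul_apply, conjTranspose_apply, Finset.mul_sum, Finset.sum_mul, mul_assoc]
        exact Finset.sum_comm
    _ = M t a b := by simp [hΦ', one_apply]

lemma slice_tprod (A : Tensor n1 n2 n3) (B : Tensor n2 n4 n3) (t : Fin n3) :
    slice Φ (tprod Φ A B) t = slice Φ A t * slice Φ B t :=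
  slice_unslice hΦ _ t

lemma slice_tconj (A : Tensor n1 n2 n3) (t : Fin n3) :
    slice Φ (tconj Φ A) t = (slice Φ A t)ᴴ :=
  slice_unslice hΦ _ t

lemma slice_projT (U : Tensor n1 r n3) (V : Tensor n2 r n3) (X : Tensor n1 n2 n3) (t : Fin n3) :
    slice Φ (projT Φ U V X) t =
      slice Φ U t * (slice Φ U t)ᴴ * slice Φ X t
        + slice Φ X t * (slice Φ V t * (slice Φ V t)ᴴ)
        - slice Φ U t * (slice Φ U t)ᴴ * slice Φ X t * (slice Φ V t * (slice Φ V t)ᴴ) := by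
  simp only [projT, slice_sub, slice_add, slice_tprod hΦ, slice_tconj hΦ]

lemma frob_sq_eq_sum_frobeniusNormSq_slice (A : Tensor n1 n2 n3) :
    frob A ^ 2 = ∑ t, frobeniusNormSq (slice Φ A t) := by
  have hΦ' : Φᴴ * Φ = 1 := mem_unitaryGroup_iff'.mp hΦ
  rw [frob, Real.sq_sqrt (Finset.sum_nonneg fun _ _ => Finset.sum_nonneg fun _ _ =>
    Finset.sum_nonneg fun _ _ => Complex.normSq_nonneg _)]
  simp only [frobeniusNormSq]
  symm
  rw [Finset.sum_comm]
  refine Finset.sum_congr rfl fun a _ => ?_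
  rw [Finset.sum_comm]
  refine Finset.sum_congr rfl fun b _ => ?_
  exact sum_normSq_mulVec_of_conjTranspose_mul_self_eq_one hΦ' (A a b)

lemma frob_sq_projT_unitTensor_le {U : Tensor n1 r n3} {V : Tensor n2 r n3}
    (hU : ∀ t, (slice Φ U t)ᴴ * slice Φ U t = 1)
    (hV : ∀ t, (slice Φ V t)ᴴ * slice Φ V t = 1) (i : Fin n1) (j : Fin n2) (k : Fin n3) :
    frob (projT Φ U V (unitTensor i j k)) ^ 2 ≤
      frob (tprod Φ (tconj Φ U) (colBasis i k)) ^ 2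
        + frob (tprod Φ (tconj Φ V) (colBasis j k)) ^ 2 := by
  simp only [frob_sq_eq_sum_frobeniusNormSq_slice hΦ, slice_projT hΦ, slice_tprod hΦ,
    slice_tconj hΦ, slice_unitTensor, slice_colBasis, ← Finset.sum_add_distrib]
  gcongr with t
  calc _ ≤ frobeniusNormSq (slice Φ U t * (slice Φ U t)ᴴ * single i j (Φ t k))
          + frobeniusNormSq (single i j (Φ t k) * (slice Φ V t * (slice Φ V t)ᴴ)) :=
        frobeniusNormSq_mul_add_mul_sub_le (isStarProjection_mul_conjTranspose (hU t)) _ _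
    _ = _ := by
        rw [Matrix.mul_assoc, frobeniusNormSq_mul_of_conjTranspose_mul_self_eq_one (hU t),
          ← Matrix.mul_assoc,
          frobeniusNormSq_mul_conjTranspose_of_conjTranspose_mul_self_eq_one (hV t),
          frobeniusNormSq_mul_single, frobeniusNormSq_mul_single, frobeniusNormSq_single_mul,
          frobeniusNormSq_mul_single]
        simp [Complex.normSq_conj]

end Unitary

end Tensor

/-- bound on the projection of the unit tensor onto T. -/
theorem statement1 {n1 n2 n3 r : ℕ} (Φ : Matrix (Fin n3) (Fin n3) ℂ)
    (hΦ : Φ ∈ Matrix.unitaryGroup (Fin n3) ℂ)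
    (Z : Tensor n1 n2 n3) (U : Tensor n1 r n3) (S : Tensor r r n3) (V : Tensor n2 r n3)
    (hSVD : SkinnySVD Φ Z r U S V)
    (μ : ℝ) (hμ : 1 ≤ μ) (hinc : Incoherent Φ Z U V μ) :
    ∀ (i : Fin n1) (j : Fin n2) (k : Fin n3),
      (frob (projT Φ U V (unitTensor i j k))) ^ 2
        ≤ 2 * μ * (∑ t, ((slice Φ Z t).rank : ℝ)) / ((min n1 n2 : ℝ) * n3) := by
  intro i j k
  set m := μ * ∑ t, ((slice Φ Z t).rank : ℝ)
  have hm : 0 ≤ m := mul_nonneg (by linarith) (by positivity)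
  have hmin : (0 : ℝ) < (min n1 n2 : ℝ) * n3 :=
    mul_pos (lt_min (mod_cast i.pos) (mod_cast j.pos)) (mod_cast k.pos)
  calc frob (projT Φ U V (unitTensor i j k)) ^ 2
      ≤ frob (tprod Φ (tconj Φ U) (colBasis i k)) ^ 2
          + frob (tprod Φ (tconj Φ V) (colBasis j k)) ^ 2 :=
        frob_sq_projT_unitTensor_le hΦ hSVD.U_orth hSVD.V_orth i j k
    _ ≤ m / (n1 * n3) + m / (n2 * n3) := add_le_add (hinc.1 i k) (hinc.2 j k)
    _ ≤ m / ((min n1 n2 : ℝ) * n3) + m / ((min n1 n2 : ℝ) * n3) := by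
        gcongr
        exacts [min_le_left _ _, min_le_right _ _]
    _ = 2 * μ * (∑ t, ((slice Φ Z t).rank : ℝ)) / ((min n1 n2 : ℝ) * n3) := by ring
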